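/- Let n ∈ ℕ and let R, A, B : ℝ → Matrix (Fin n) (Fin n) ℝ be differentiable with R(t) orthogonal (R(t)·R(t)ᵀ = 1) for all t. Define a(t) := R(t)·A(t)·R(t)ᵀ, b(t) := R(t)·B(t)·R(t)ᵀ, and the polar spin ω(t) := R'(t)·R(t)ᵀ. Then for every t: trace(A(t)ᵀ·B'(t)) = trace(a(t)ᵀ·(b'(t) + b(t)·ω(t) − ω(t)·b(t))), i.e., the double contraction of A with the material rate of B equals the double contraction of a with the Green–Naghdi corotational rate of b. -/

import Mathlib

/-
Push the Lagrangian rate forward along the rotation: since `R Rᵀ = 1`, the polar spin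
`ω = Ṙ Rᵀ` is skew, and differentiating `b = R B Rᵀ` gives `ḃ = ω b + R Ḃ Rᵀ - b ω`.
Hence the Green–Naghdi rate of `b` is exactly `R Ḃ Rᵀ`, and the double contraction
`X : Y = tr (Xᵀ Y)` is invariant under simultaneous conjugation by the orthogonal `R`.
-/

open Matrix

/-- Entrywise derivative of a matrix-valued function of a real variable. -/
noncomputable def matDeriv {n : ℕ} (A : ℝ → Matrix (Fin n) (Fin n) ℝ) (t : ℝ) :
    Matrix (Fin n) (Fin n) ℝ :=
  Matrix.of fun i j => deriv (fun s => A s i j) t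

section Algebra

variable {m α : Type*} [Fintype m] [DecidableEq m] [CommRing α]

theorem Matrix.trace_transpose_conj_mul_conj {Q X Y : Matrix m m α} (hQ : Qᵀ * Q = 1) :
    ((Q * X * Qᵀ)ᵀ * (Q * Y * Qᵀ)).trace = (Xᵀ * Y).trace := by
  have hconj : (Q * X * Qᵀ)ᵀ * (Q * Y * Qᵀ) = Q * (Xᵀ * (Qᵀ * Q) * Y) * Qᵀ := by
    simp only [transpose_mul, transpose_transpose, Matrix.mul_assoc]
  rw [hconj, hQ, Matrix.mul_one, trace_mul_cycle, hQ, Matrix.one_mul]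

/-- The left-hand side is the Green–Naghdi rate, with spin `Q' Qᵀ`, of `Q C Qᵀ`, whose
derivative is expanded by the product rule. -/
theorem Matrix.conj_rate_add_mul_spin_sub_spin_mul {Q Q' C C' : Matrix m m α}
    (hQ : Qᵀ * Q = 1) (hskew : Q' * Qᵀ + Q * Q'ᵀ = 0) :
    Q' * C * Qᵀ + Q * C' * Qᵀ + Q * C * Q'ᵀ + Q * C * Qᵀ * (Q' * Qᵀ)
      - Q' * Qᵀ * (Q * C * Qᵀ) = Q * C' * Qᵀ := by
  have hspin_left : Q' * Qᵀ * (Q * C * Qᵀ) = Q' * C * Qᵀ := by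
    rw [Matrix.mul_assoc Q', ← Matrix.mul_assoc Qᵀ, ← Matrix.mul_assoc Qᵀ, hQ, Matrix.one_mul,
      Matrix.mul_assoc]
  have hspin_right : Q * C * Qᵀ * (Q' * Qᵀ) = -(Q * C * Q'ᵀ) := by
    rw [eq_neg_of_add_eq_zero_left hskew, Matrix.mul_neg, Matrix.mul_assoc (Q * C),
      ← Matrix.mul_assoc Qᵀ, hQ, Matrix.one_mul]
  rw [hspin_left, hspin_right]
  abel

end Algebra

section Calculus

variable {n : ℕ}

theorem differentiableAt_mul_apply {M N : ℝ → Matrix (Fin n) (Fin n) ℝ} {t : ℝ}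
    (hM : ∀ i j, DifferentiableAt ℝ (fun s => M s i j) t)
    (hN : ∀ i j, DifferentiableAt ℝ (fun s => N s i j) t) (i j : Fin n) :
    DifferentiableAt ℝ (fun s => (M s * N s) i j) t := by
  simp only [mul_apply]
  exact DifferentiableAt.fun_sum fun k _ => (hM i k).mul (hN k j)

theorem matDeriv_mul {M N : ℝ → Matrix (Fin n) (Fin n) ℝ} {t : ℝ}
    (hM : ∀ i j, DifferentiableAt ℝ (fun s => M s i j) t)
    (hN : ∀ i j, DifferentiableAt ℝ (fun s => N s i j) t) :
    matDeriv (fun s => M s * N s) t = matDeriv M t * N t + M t * matDeriv N t := by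
  ext i j
  simp only [matDeriv, of_apply, Matrix.add_apply, mul_apply]
  rw [deriv_fun_sum fun k _ => (hM i k).fun_mul (hN k j), ← Finset.sum_add_distrib]
  exact Finset.sum_congr rfl fun k _ => deriv_fun_mul (hM i k) (hN k j)

theorem matDeriv_transpose (M : ℝ → Matrix (Fin n) (Fin n) ℝ) (t : ℝ) :
    matDeriv (fun s => (M s)ᵀ) t = (matDeriv M t)ᵀ := rfl

theorem matDeriv_const (C : Matrix (Fin n) (Fin n) ℝ) (t : ℝ) :
    matDeriv (fun _ => C) t = 0 := by
  ext i j
  simp [matDeriv]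

theorem matDeriv_conj {R B : ℝ → Matrix (Fin n) (Fin n) ℝ} {t : ℝ}
    (hR : ∀ i j, DifferentiableAt ℝ (fun s => R s i j) t)
    (hB : ∀ i j, DifferentiableAt ℝ (fun s => B s i j) t) :
    matDeriv (fun s => R s * B s * (R s)ᵀ) t =
      matDeriv R t * B t * (R t)ᵀ + R t * matDeriv B t * (R t)ᵀ
        + R t * B t * (matDeriv R t)ᵀ := by
  rw [matDeriv_mul (N := fun s => (R s)ᵀ) (differentiableAt_mul_apply hR hB) fun i j => hR j i,
    matDeriv_mul hR hB, matDeriv_transpose]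
  noncomm_ring

theorem matDeriv_mul_transpose_add_eq_zero {R : ℝ → Matrix (Fin n) (Fin n) ℝ} {t : ℝ}
    (hR : ∀ i j, DifferentiableAt ℝ (fun s => R s i j) t) (horth : ∀ s, R s * (R s)ᵀ = 1) :
    matDeriv R t * (R t)ᵀ + R t * (matDeriv R t)ᵀ = 0 := by
  rw [← matDeriv_transpose, ← matDeriv_mul (N := fun s => (R s)ᵀ) hR fun i j => hR j i,
    funext horth, matDeriv_const]

end Calculus

theorem trace_material_rate_eq_trace_green_naghdi_general {n : ℕ}
    (R A B : ℝ → Matrix (Fin n) (Fin n) ℝ)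
    (hR : ∀ t, ∀ i j, DifferentiableAt ℝ (fun s => R s i j) t)
    (hB : ∀ t, ∀ i j, DifferentiableAt ℝ (fun s => B s i j) t)
    (horth : ∀ t, R t * (R t)ᵀ = 1) :
    ∀ t : ℝ,
      let a : ℝ → Matrix (Fin n) (Fin n) ℝ := fun s => R s * A s * (R s)ᵀ
      let b : ℝ → Matrix (Fin n) (Fin n) ℝ := fun s => R s * B s * (R s)ᵀ
      let ω : Matrix (Fin n) (Fin n) ℝ := matDeriv R t * (R t)ᵀ
      ((A t)ᵀ * matDeriv B t).trace =
        ((a t)ᵀ * (matDeriv b t + b t * ω - ω * b t)).trace := by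
  intro t
  dsimp only
  have hRR : (R t)ᵀ * R t = 1 := mul_eq_one_comm.mp (horth t)
  rw [matDeriv_conj (hR t) (hB t),
    conj_rate_add_mul_spin_sub_spin_mul hRR (matDeriv_mul_transpose_add_eq_zero (hR t) horth),
    trace_transpose_conj_mul_conj hRR]

/-- Proposition 2.2a: `A : Ḃ = a : b^GN`, i.e. the double contraction of the
Lagrangian pair equals that of the Eulerian counterpart pair with the
Green–Naghdi corotational rate. -/
theorem trace_material_rate_eq_trace_green_naghdi {n : ℕ}
    (R A B : ℝ → Matrix (Fin n) (Fin n) ℝ)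
    (hR : ∀ t, ∀ i j, DifferentiableAt ℝ (fun s => R s i j) t)
    (hA : ∀ t, ∀ i j, DifferentiableAt ℝ (fun s => A s i j) t)
    (hB : ∀ t, ∀ i j, DifferentiableAt ℝ (fun s => B s i j) t)
    (horth : ∀ t, R t * (R t)ᵀ = 1) :
    ∀ t : ℝ,
      let a : ℝ → Matrix (Fin n) (Fin n) ℝ := fun s => R s * A s * (R s)ᵀ
      let b : ℝ → Matrix (Fin n) (Fin n) ℝ := fun s => R s * B s * (R s)ᵀ
      let ω : Matrix (Fin n) (Fin n) ℝ := matDeriv R t * (R t)ᵀ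
      ((A t)ᵀ * matDeriv B t).trace =
        ((a t)ᵀ * (matDeriv b t + b t * ω - ω * b t)).trace :=
  trace_material_rate_eq_trace_green_naghdi_general R A B hR hB horth
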